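/- Let f : ℝ^d → ℝ be L-smooth with ‖∇f(w)‖ ≤ G for all w in a convex set W of diameter bounded by W₀ (so ‖w‖ ≤ W₀ for w ∈ W). Let m ∈ {0,1}^d. Then for every w ∈ W, ‖m ⊙ ∇f(m ⊙ w) − ∇f(w)‖² ≤ 2G²‖m − 1‖² + 2W₀²L²‖m − 1‖², where 1 denotes the all-ones vector. -/

import Mathlib

noncomputable def hadamard {d : ℕ} (m w : EuclideanSpace ℝ (Fin d)) :
    EuclideanSpace ℝ (Fin d) := WithLp.toLp 2 (fun j => m j * w j)

noncomputable def allOnes (d : ℕ) : EuclideanSpace ℝ (Fin d) := WithLp.toLp 2 (fun _ => (1 : ℝ))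

lemma euc_norm_sq {d : ℕ} (x : EuclideanSpace ℝ (Fin d)) :
    ‖x‖ ^ 2 = ∑ j, (x j) ^ 2 := by
  rw [EuclideanSpace.norm_eq, Real.sq_sqrt (by positivity)]
  simp [Real.norm_eq_abs, sq_abs]

lemma hadamard_norm_sq_le {d : ℕ} (u v : EuclideanSpace ℝ (Fin d)) :
    ‖hadamard u v‖ ^ 2 ≤ ‖u‖ ^ 2 * ‖v‖ ^ 2 := by
  rw [euc_norm_sq, euc_norm_sq, euc_norm_sq, Finset.sum_mul]
  apply Finset.sum_le_sum
  intro j _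
  have hv : (v j) ^ 2 ≤ ∑ i, (v i) ^ 2 :=
    Finset.single_le_sum (f := fun i => (v i) ^ 2) (fun i _ => by positivity) (Finset.mem_univ j)
  have : (hadamard u v j) ^ 2 = (u j) ^ 2 * (v j) ^ 2 := by
    simp [hadamard, mul_pow]
  rw [this]
  exact mul_le_mul_of_nonneg_left hv (by positivity)

lemma hadamard_mask_norm_sq_le {d : ℕ} (m : EuclideanSpace ℝ (Fin d))
    (hm : ∀ j, m j = 0 ∨ m j = 1) (v : EuclideanSpace ℝ (Fin d)) :
    ‖hadamard m v‖ ^ 2 ≤ ‖v‖ ^ 2 := by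
  rw [euc_norm_sq, euc_norm_sq]
  apply Finset.sum_le_sum
  intro j _
  have : (hadamard m v j) ^ 2 = (m j) ^ 2 * (v j) ^ 2 := by simp [hadamard, mul_pow]
  rw [this]
  rcases hm j with h | h <;> simp [h]
  positivity

/-- For an `L`-smooth `f` with gradients bounded by `G` and `‖w‖ ≤ W₀` on a convex set `W`,
and a 0/1 mask `m`,
`‖m ⊙ ∇f(m ⊙ w) − ∇f(w)‖² ≤ 2G²‖m − 1‖² + 2W₀²L²‖m − 1‖²`. -/
theorem masked_gradient_deviation {d : ℕ} (L G W₀ : ℝ)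
    (W : Set (EuclideanSpace ℝ (Fin d))) (hW : Convex ℝ W)
    (f' : EuclideanSpace ℝ (Fin d) → EuclideanSpace ℝ (Fin d))
    (hLip : ∀ x y, ‖f' x - f' y‖ ≤ L * ‖x - y‖)
    (hG : ∀ w ∈ W, ‖f' w‖ ≤ G)
    (hbound : ∀ w ∈ W, ‖w‖ ≤ W₀)
    (m : EuclideanSpace ℝ (Fin d)) (hm : ∀ j, m j = 0 ∨ m j = 1) :
    ∀ w ∈ W,
      ‖hadamard m (f' (hadamard m w)) - f' w‖ ^ 2 ≤
        2 * G ^ 2 * ‖m - allOnes d‖ ^ 2 + 2 * W₀ ^ 2 * L ^ 2 * ‖m - allOnes d‖ ^ 2 := by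
  intro w hw
  set g := f' w with hg
  set gm := f' (hadamard m w) with hgm
  set A : EuclideanSpace ℝ (Fin d) := hadamard m (gm - g) with hA
  set B : EuclideanSpace ℝ (Fin d) := hadamard (m - allOnes d) g with hB
  have hsplit : hadamard m gm - g = A + B := by
    ext j
    simp [hA, hB, hadamard, allOnes]
    ring
  -- bound on B
  have hGnn : (0 : ℝ) ≤ G := le_trans (norm_nonneg _) (hG w hw)
  have hW0nn : (0 : ℝ) ≤ W₀ := le_trans (norm_nonneg _) (hbound w hw)
  have hBsq : ‖B‖ ^ 2 ≤ G ^ 2 * ‖m - allOnes d‖ ^ 2 := by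
    calc ‖B‖ ^ 2 ≤ ‖m - allOnes d‖ ^ 2 * ‖g‖ ^ 2 := hadamard_norm_sq_le _ _
      _ ≤ ‖m - allOnes d‖ ^ 2 * G ^ 2 := by
          apply mul_le_mul_of_nonneg_left _ (by positivity)
          exact pow_le_pow_left₀ (norm_nonneg _) (hG w hw) 2
      _ = G ^ 2 * ‖m - allOnes d‖ ^ 2 := by ring
  -- bound on A
  have hdiff : hadamard m w - w = hadamard (m - allOnes d) w := by
    ext j
    simp [hadamard, allOnes]
    ring
  have hLipA : ‖gm - g‖ ≤ L * ‖hadamard m w - w‖ := hLip _ _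
  have hAsq : ‖A‖ ^ 2 ≤ W₀ ^ 2 * L ^ 2 * ‖m - allOnes d‖ ^ 2 := by
    have h1 : ‖A‖ ^ 2 ≤ ‖gm - g‖ ^ 2 := hadamard_mask_norm_sq_le m hm _
    have h2 : ‖gm - g‖ ^ 2 ≤ (L * ‖hadamard m w - w‖) ^ 2 :=
      pow_le_pow_left₀ (norm_nonneg _) hLipA 2
    have h3 : ‖hadamard m w - w‖ ^ 2 ≤ ‖m - allOnes d‖ ^ 2 * ‖w‖ ^ 2 := by
      rw [hdiff]; exact hadamard_norm_sq_le _ _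
    have h4 : ‖w‖ ^ 2 ≤ W₀ ^ 2 := pow_le_pow_left₀ (norm_nonneg _) (hbound w hw) 2
    have h5 : ‖m - allOnes d‖ ^ 2 * ‖w‖ ^ 2 ≤ ‖m - allOnes d‖ ^ 2 * W₀ ^ 2 :=
      mul_le_mul_of_nonneg_left h4 (by positivity)
    nlinarith [sq_nonneg L, sq_nonneg (‖m - allOnes d‖)]
  -- combine
  have htri : ‖A + B‖ ≤ ‖A‖ + ‖B‖ := norm_add_le _ _
  have hfin : ‖A + B‖ ^ 2 ≤ 2 * ‖A‖ ^ 2 + 2 * ‖B‖ ^ 2 := by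
    nlinarith [norm_nonneg A, norm_nonneg B, norm_nonneg (A + B), sq_nonneg (‖A‖ - ‖B‖)]
  rw [hsplit]
  nlinarith [hAsq, hBsq]
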